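/- Let n ≥ 2 be an even integer, 0 < p < 1, and let t ≥ 1 be an integer. Let f(g) denote the number of fixed points of a permutation g ∈ S_n. Then Σ_{g ∈ S_n} P^{*t}(g) · (f(g) − 1) = (n − 1) · (p − (1 − p)/(n − 1))^t. -/

import Mathlib

/-!
The step distribution `stepP` is a class function on `S_n`. For any class function `w`, the
matrix `(k, j) ↦ ∑ h, w h * [h k = j]` is invariant under simultaneous relabelling, hence of the
form `b + a·[k = j]` by 2-transitivity of `S_n`. Since `χ(h g) + 1 = ∑ i [h (g i) = i]`, left
convolution by `w` therefore multiplies the character `χ = fix − 1` by the scalar `a`, and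
evaluating at `g = 1` gives `a = (∑ w χ) / (n − 1)`.

For the involution walk, `P` is constant on the involutions with `s` transpositions, of which
there are `n! / (2^s s! (n − 2s)!)`, so with `n = 2m`
`∑ P χ = ∑_s C(m,s) p^(m−s) (1−p)^s (n − 1 − 2s) = (n − 1) − 2m(1 − p) = np − 1`
by the mean of the binomial distribution. The eigenvalue is thus `(np − 1)/(n − 1)`,
and `t` convolutions give its `t`-th power times `χ(1) = n − 1`.
-/

open Finset

/-- One step of the involution walk on `S_n`: an involution `σ` with `s` transpositions
(so `σ.support.card = 2*s`) has probability
`(n/2 choose s) * p^(n/2-s) * (1-p)^s * 2^s * s! * (n-2s)! / n!`;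
non-involutions have probability `0`. -/
noncomputable def stepP (n : ℕ) (p : ℝ) (σ : Equiv.Perm (Fin n)) : ℝ :=
  if σ * σ = 1 then
    ((n / 2).choose (σ.support.card / 2) : ℝ) * p ^ (n / 2 - σ.support.card / 2) *
      (1 - p) ^ (σ.support.card / 2) * (2 : ℝ) ^ (σ.support.card / 2) *
      (Nat.factorial (σ.support.card / 2) : ℝ) * (Nat.factorial (n - σ.support.card) : ℝ) /
      (Nat.factorial n : ℝ)
  else 0

/-- The `t`-step distribution of the involution walk:
`P^{*t}(g) = Σ_{g₁⋯g_t = g} P(g₁)⋯P(g_t)`, defined by convolution. -/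
noncomputable def convPow (n : ℕ) (p : ℝ) : ℕ → Equiv.Perm (Fin n) → ℝ
  | 0 => fun g => if g = 1 then 1 else 0
  | t + 1 => fun g => ∑ h : Equiv.Perm (Fin n), stepP n p h * convPow n p t (h⁻¹ * g)

/-- Total variation distance between `P^{*t}` and the uniform distribution:
`(1/2) Σ_g |P^{*t}(g) − 1/n!|`. -/
noncomputable def tvDist (n : ℕ) (p : ℝ) (t : ℕ) : ℝ :=
  (1 / 2) * ∑ g : Equiv.Perm (Fin n), |convPow n p t g - 1 / (Nat.factorial n : ℝ)|

open Equiv Equiv.Perm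

lemma exists_perm_apply_eq_and_apply_eq {α : Type*} [DecidableEq α] {k j k' j' : α} (h : k ≠ j)
    (h' : k' ≠ j') : ∃ τ : Perm α, τ k = k' ∧ τ j = j' := by
  refine ⟨swap (swap k k' j) j' * swap k k', ?_, by simp⟩
  have hj : swap k k' j ≠ k' := fun hj => h (by simpa using congrArg (swap k k') hj.symm)
  simpa using swap_apply_of_ne_of_ne hj.symm h'

section StandardCharacter

variable {α : Type*} [Fintype α] [DecidableEq α]

/-- The character of the standard representation `[n-1,1]`: fixed points minus one. -/
noncomputable def standardChar (g : Perm α) : ℝ :=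
  ((Fintype.card α - #g.support : ℕ) : ℝ) - 1

lemma standardChar_eq_sum (g : Perm α) :
    standardChar g = ∑ i, (if g i = i then 1 else 0) - 1 := by
  have hfix : #g.supportᶜ = #({i | g i = i} : Finset α) := by
    congr 1; ext i; simp
  rw [standardChar, ← card_compl, hfix, natCast_card_filter]

lemma standardChar_one : standardChar (1 : Perm α) = Fintype.card α - 1 := by
  simp [standardChar]

noncomputable def pointKernel (w : Perm α → ℝ) (k j : α) : ℝ :=
  ∑ h : Perm α, w h * if h k = j then 1 else 0

variable {w : Perm α → ℝ}

lemma pointKernel_apply_apply (hw : ∀ τ σ, w (τ * σ * τ⁻¹) = w σ) (τ : Perm α)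
    (k j : α) :
    pointKernel w (τ k) (τ j) = pointKernel w k j := by
  refine Fintype.sum_equiv (MulAut.conj τ⁻¹).toEquiv _ _ fun σ => ?_
  have hwσ := hw τ⁻¹ σ
  rw [inv_inv] at hwσ
  simp [hwσ, symm_apply_eq]

lemma exists_pointKernel_eq [Nontrivial α] (hw : ∀ τ σ, w (τ * σ * τ⁻¹) = w σ) :
    ∃ a b : ℝ, ∀ k j, pointKernel w k j = b + a * if k = j then 1 else 0 := by
  obtain ⟨i₀, i₁, hi⟩ := exists_pair_ne α
  refine ⟨pointKernel w i₀ i₀ - pointKernel w i₀ i₁, pointKernel w i₀ i₁, fun k j => ?_⟩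
  split_ifs with hkj
  · subst hkj
    have hdiag := pointKernel_apply_apply hw (swap i₀ k) i₀ i₀
    rw [swap_apply_left] at hdiag
    rw [hdiag]
    ring
  · obtain ⟨τ, hτk, hτj⟩ := exists_perm_apply_eq_and_apply_eq hi hkj
    rw [← hτk, ← hτj, pointKernel_apply_apply hw]
    ring

lemma sum_mul_standardChar_mul_eq_sum_pointKernel (g : Perm α) :
    ∑ h, w h * standardChar (h * g) = ∑ i, pointKernel w (g i) i - ∑ h, w h := by
  simp only [standardChar_eq_sum, mul_sub, mul_one, mul_sum, sum_sub_distrib, pointKernel,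
    Perm.mul_apply]
  congr 1
  exact sum_comm

lemma exists_sum_mul_standardChar_mul_eq [Nontrivial α]
    (hw : ∀ τ σ, w (τ * σ * τ⁻¹) = w σ) :
    ∃ a : ℝ, ∀ g, ∑ h, w h * standardChar (h * g) = a * standardChar g := by
  obtain ⟨a, b, hab⟩ := exists_pointKernel_eq hw
  obtain ⟨i₀⟩ := (inferInstance : Nonempty α)
  have htotal : ∑ h, w h = ∑ j, pointKernel w i₀ j := by
    simp only [pointKernel, mul_boole, sum_comm (γ := α), sum_ite_eq, mem_univ, if_true]
  refine ⟨a, fun g => ?_⟩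
  rw [sum_mul_standardChar_mul_eq_sum_pointKernel, htotal, standardChar_eq_sum]
  simp only [hab, sum_add_distrib, ← mul_sum, sum_ite_eq, mem_univ, if_true]
  ring

theorem sum_mul_standardChar_mul [Nontrivial α] (hw : ∀ τ σ, w (τ * σ * τ⁻¹) = w σ)
    (g : Perm α) :
    ∑ h, w h * standardChar (h * g) =
      (∑ h, w h * standardChar h) / (Fintype.card α - 1) * standardChar g := by
  obtain ⟨a, ha⟩ := exists_sum_mul_standardChar_mul_eq hw
  have hcard : (Fintype.card α : ℝ) - 1 ≠ 0 := by
    have : (1 : ℝ) < Fintype.card α := by exact_mod_cast Fintype.one_lt_card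
    linarith
  have h1 := ha 1
  simp only [mul_one, standardChar_one] at h1
  rw [ha, h1]
  field_simp

end StandardCharacter

section Involutions

variable {α : Type*} [Fintype α] [DecidableEq α]

lemma cycleType_eq_replicate_two_iff (σ : Perm α) (s : ℕ) :
    σ.cycleType = Multiset.replicate s 2 ↔ σ * σ = 1 ∧ #σ.support = 2 * s := by
  rw [← sq]
  constructor
  · intro h
    refine ⟨pow_prime_eq_one_iff.mpr fun c hc => ?_, ?_⟩
    · rw [h] at hc
      exact Multiset.eq_of_mem_replicate hc
    · rw [← sum_cycleType, h, Multiset.sum_replicate, smul_eq_mul, mul_comm]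
  · rintro ⟨hsq, hcard⟩
    have h := cycleType_of_pow_prime_eq_one hsq
    have hsum := sum_cycleType σ
    rw [h, Multiset.sum_replicate, smul_eq_mul, hcard] at hsum
    rw [h, show Multiset.card σ.cycleType = s by omega]

lemma card_cycleType_eq_replicate_two_mul {s : ℕ} (hs : 2 * s ≤ Fintype.card α) :
    #({σ | σ.cycleType = Multiset.replicate s 2} : Finset (Perm α)) *
      (2 ^ s * s.factorial * (Fintype.card α - 2 * s).factorial) = (Fintype.card α).factorial := by
  have h := card_of_cycleType_mul_eq α (Multiset.replicate s 2)
  rw [if_pos ⟨by simpa [mul_comm] using hs, fun a ha => (Multiset.eq_of_mem_replicate ha).ge⟩] at h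
  rw [← h]
  congr 1
  rcases Nat.eq_zero_or_pos s with rfl | hs0
  · simp
  · have hsupp : (Multiset.replicate s 2).toFinset = {2} := by
      ext; simp [hs0.ne']
    simp only [Multiset.sum_replicate, smul_eq_mul, Multiset.prod_replicate, hsupp,
      prod_singleton, Multiset.count_replicate_self, mul_comm s 2]
    ring

end Involutions

lemma sum_range_mul_pow_mul_pow_mul_choose {R : Type*} [CommSemiring R] (x y : R) (m : ℕ) :
    ∑ k ∈ range (m + 1), (k : R) * x ^ k * y ^ (m - k) * m.choose k =
      m * x * (x + y) ^ (m - 1) := by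
  rcases m with _ | m
  · simp
  rw [sum_range_succ', add_pow, mul_sum]
  simp only [Nat.cast_zero, zero_mul, add_zero, Nat.add_sub_cancel]
  refine sum_congr rfl fun k _ => ?_
  rw [show m + 1 - (k + 1) = m - k by omega]
  calc ((k + 1 : ℕ) : R) * x ^ (k + 1) * y ^ (m - k) * ((m + 1).choose (k + 1) : ℕ)
      = x ^ (k + 1) * y ^ (m - k) * (((m + 1).choose (k + 1) * (k + 1) : ℕ) : R) := by
        push_cast; ring
    _ = x ^ (k + 1) * y ^ (m - k) * (((m + 1) * m.choose k : ℕ) : R) := by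
        rw [Nat.add_one_mul_choose_eq]
    _ = ((m + 1 : ℕ) : R) * x * (x ^ k * y ^ (m - k) * (m.choose k : ℕ)) := by
        push_cast; ring

lemma stepP_conj (n : ℕ) (p : ℝ) (τ σ : Perm (Fin n)) :
    stepP n p (τ * σ * τ⁻¹) = stepP n p σ := by
  have hinv : τ * σ * τ⁻¹ * (τ * σ * τ⁻¹) = 1 ↔ σ * σ = 1 := by
    rw [show τ * σ * τ⁻¹ * (τ * σ * τ⁻¹) = τ * (σ * σ) * τ⁻¹ by group, conj_eq_one_iff]
  simp only [stepP, card_support_conj, hinv]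

section InvolutionWalk

variable {n : ℕ} {p : ℝ}

lemma sum_stepP_mul_standardChar_eq_sum_range {m : ℕ} (hm : n = m + m) :
    ∑ σ, stepP n p σ * standardChar σ =
      ∑ s ∈ range (m + 1), (1 - p) ^ s * p ^ (m - s) * m.choose s * ((n : ℝ) - 1 - 2 * s) := by
  set v : ℕ → ℝ := fun s => (m.choose s : ℝ) * p ^ (m - s) * (1 - p) ^ s * 2 ^ s *
    s.factorial * (n - 2 * s).factorial / n.factorial * (((n - 2 * s : ℕ) : ℝ) - 1) with hv
  have hpoint : ∀ σ : Perm (Fin n), stepP n p σ * standardChar σ =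
      ∑ s ∈ range (m + 1), if σ.cycleType = Multiset.replicate s 2 then v s else 0 := by
    intro σ
    simp only [cycleType_eq_replicate_two_iff, ite_and]
    by_cases hσ : σ * σ = 1
    · obtain ⟨s, hs⟩ := two_dvd_card_support (sq σ ▸ hσ)
      have hsn : 2 * s ≤ n := by simpa [hs] using card_le_univ σ.support
      have hsm : s ∈ range (m + 1) := by rw [mem_range]; omega
      simp only [hσ, if_true, hs, mul_eq_mul_left_iff, OfNat.ofNat_ne_zero, or_false,
        sum_ite_eq, hsm, hv, stepP, standardChar, Fintype.card_fin,
        Nat.mul_div_cancel_left s two_pos, show n / 2 = m by omega]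
    · simp [hσ, stepP]
  rw [sum_congr rfl fun σ _ => hpoint σ, sum_comm]
  refine sum_congr rfl fun s hs => ?_
  have hsn : 2 * s ≤ n := by rw [mem_range] at hs; omega
  have hcard : (#({σ | σ.cycleType = Multiset.replicate s 2} : Finset (Perm (Fin n))) : ℝ) *
      (2 ^ s * s.factorial * (n - 2 * s).factorial) = n.factorial := by
    exact_mod_cast Fintype.card_fin n ▸
      card_cycleType_eq_replicate_two_mul (α := Fin n) (s := s) (by simpa using hsn)
  rw [sum_ite, sum_const_zero, add_zero, sum_const, nsmul_eq_mul, hv]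
  simp only [Nat.cast_sub hsn, Nat.cast_mul, Nat.cast_ofNat]
  field_simp
  linear_combination ((1 - p) ^ s * p ^ (m - s) * m.choose s * ((n : ℝ) - 1 - 2 * s)) * hcard

lemma sum_stepP_mul_standardChar (hne : Even n) :
    ∑ σ, stepP n p σ * standardChar σ = n * p - 1 := by
  obtain ⟨m, hm⟩ := hne
  have htotal := add_pow (1 - p) p m
  have hmean := sum_range_mul_pow_mul_pow_mul_choose (1 - p) p m
  simp only [sub_add_cancel, one_pow, mul_one] at htotal hmean
  calc ∑ σ, stepP n p σ * standardChar σ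
      = ((n : ℝ) - 1) * ∑ s ∈ range (m + 1), (1 - p) ^ s * p ^ (m - s) * m.choose s -
          2 * ∑ s ∈ range (m + 1), (s : ℝ) * (1 - p) ^ s * p ^ (m - s) * m.choose s := by
        rw [sum_stepP_mul_standardChar_eq_sum_range hm, mul_sum, mul_sum, ← sum_sub_distrib]
        exact sum_congr rfl fun _ _ => by ring
    _ = n * p - 1 := by
        rw [← htotal, hmean, hm]
        push_cast
        ring

lemma sum_convPow_mul_of_forall_sum_stepP_mul {f : Perm (Fin n) → ℝ} {a : ℝ}
    (hf : ∀ g, ∑ h, stepP n p h * f (h * g) = a * f g) (t : ℕ) :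
    ∑ g, convPow n p t g * f g = a ^ t * f 1 := by
  induction t with
  | zero => simp [convPow]
  | succ t ih =>
    calc ∑ g, convPow n p (t + 1) g * f g
        = ∑ h, stepP n p h * ∑ g, convPow n p t (h⁻¹ * g) * f g := by
          simp only [convPow, sum_mul, mul_sum, mul_assoc]
          exact sum_comm
      _ = ∑ h, stepP n p h * ∑ g, convPow n p t g * f (h * g) := by
          refine sum_congr rfl fun h _ => ?_
          congr 1
          exact (Fintype.sum_equiv (Equiv.mulLeft h) _ _ fun g => by simp).symm
      _ = ∑ g, convPow n p t g * ∑ h, stepP n p h * f (h * g) := by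
          simp only [mul_sum]
          rw [sum_comm]
          exact sum_congr rfl fun _ _ => sum_congr rfl fun _ _ => by ring
      _ = a ^ (t + 1) * f 1 := by
          simp only [hf, mul_left_comm _ a, ← mul_sum, ih]
          ring

end InvolutionWalk

theorem stmt7_general (n : ℕ) (hn : 2 ≤ n) (hne : Even n) (p : ℝ) (t : ℕ) :
    ∑ g : Equiv.Perm (Fin n), convPow n p t g * (((n - g.support.card : ℕ) : ℝ) - 1)
      = ((n : ℝ) - 1) * (p - (1 - p) / ((n : ℝ) - 1)) ^ t := by
  have : Nontrivial (Fin n) := Fin.nontrivial_iff_two_le.mpr hn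
  have hn1 : (n : ℝ) - 1 ≠ 0 := by
    have : (2 : ℝ) ≤ n := by exact_mod_cast hn
    linarith
  have heigen : ∀ g : Perm (Fin n), ∑ h, stepP n p h * standardChar (h * g) =
      (p - (1 - p) / ((n : ℝ) - 1)) * standardChar g := by
    intro g
    rw [sum_mul_standardChar_mul (stepP_conj n p), sum_stepP_mul_standardChar hne,
      Fintype.card_fin]
    congr 1
    field_simp
    ring
  have hχ : ∀ g : Perm (Fin n), ((n - #g.support : ℕ) : ℝ) - 1 = standardChar g := by
    simp [standardChar]
  simp only [hχ]
  rw [sum_convPow_mul_of_forall_sum_stepP_mul heigen, standardChar_one, Fintype.card_fin]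
  ring

/-- The `t`-step expectation of the character `f(g) − 1` of the representation
`[n−1,1]` is `(n−1)(p − (1−p)/(n−1))^t`. -/
theorem stmt7 (n : ℕ) (hn : 2 ≤ n) (hne : Even n) (p : ℝ) (hp0 : 0 < p) (hp1 : p < 1)
    (t : ℕ) (ht : 1 ≤ t) :
    ∑ g : Equiv.Perm (Fin n), convPow n p t g * (((n - g.support.card : ℕ) : ℝ) - 1)
      = ((n : ℝ) - 1) * (p - (1 - p) / ((n : ℝ) - 1)) ^ t :=
  stmt7_general n hn hne p t
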